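/- arXiv:1309.7817 — 2 statements merged into one kernel-verified Lean document; each statement's English description precedes it below -/
import Mathlib

section
/- For any positive reals P and a_1,...,a_K, the sum rate with vector normalization dominates that with matrix normalization: Σ_{k=1}^K log₂(1 + P/(K a_k)) ≥ K log₂(1 + P/(Σ_{k=1}^K a_k)). -/
/-! Writing `P / (K aₖ) = c / aₖ` with `c = P / K`, the claim is Jensen's inequality for the
function `x ↦ log (1 + c / x) = log (x + c) - log x`, which is convex on `(0, ∞)` because its
second derivative `1 / x² - 1 / (x + c)²` is nonnegative; at the mean `x = (∑ aₖ) / K` it takes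
the value `log (1 + P / ∑ aₖ)`. -/

open Real Set Finset

lemma convexOn_log_add_sub_log {c : ℝ} (hc : 0 ≤ c) :
    ConvexOn ℝ (Ioi 0) (fun x => log (x + c) - log x) := by
  refine convexOn_of_hasDerivWithinAt2_nonneg (f' := fun x => (x + c)⁻¹ - x⁻¹)
    (f'' := fun x => -((x + c) ^ 2)⁻¹ + (x ^ 2)⁻¹) (convex_Ioi 0) ?_ ?_ ?_ ?_
  · intro x hx
    have hx : 0 < x := hx
    have hxc : x + c ≠ 0 := by positivity
    exact ContinuousAt.continuousWithinAt
      (by fun_prop (disch := first | assumption | exact hx.ne'))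
  · intro x hx
    rw [interior_Ioi] at hx
    have hx : 0 < x := hx
    exact (((hasDerivAt_log (by positivity)).comp_add_const x c).sub
      (hasDerivAt_log hx.ne')).hasDerivWithinAt
  · intro x hx
    rw [interior_Ioi] at hx
    have hx : 0 < x := hx
    exact (((hasDerivAt_inv (by positivity)).comp_add_const x c).sub
      (hasDerivAt_inv hx.ne')).hasDerivWithinAt.congr_deriv (by ring)
  · intro x hx
    rw [interior_Ioi] at hx
    have hx : 0 < x := hx
    have : ((x + c) ^ 2)⁻¹ ≤ (x ^ 2)⁻¹ := inv_anti₀ (by positivity) (by nlinarith)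
    linarith

lemma convexOn_log_one_add_div {c : ℝ} (hc : 0 ≤ c) :
    ConvexOn ℝ (Ioi 0) (fun x => log (1 + c / x)) := by
  refine (convexOn_log_add_sub_log hc).congr fun x hx => ?_
  have hx : 0 < x := hx
  dsimp only
  rw [← log_div (by positivity) hx.ne', add_div, div_self hx.ne']

lemma ConvexOn.card_mul_map_average_le {ι : Type*} [Fintype ι] [Nonempty ι] {s : Set ℝ}
    {f : ℝ → ℝ} (hf : ConvexOn ℝ s f) {p : ι → ℝ} (hp : ∀ i, p i ∈ s) :
    Fintype.card ι * f ((∑ i, p i) / Fintype.card ι) ≤ ∑ i, f (p i) := by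
  have hn : (0 : ℝ) < Fintype.card ι := by exact_mod_cast Fintype.card_pos
  have h := hf.map_sum_le (t := univ) (w := fun _ => (Fintype.card ι : ℝ)⁻¹)
    (fun _ _ => by positivity) (by simp [card_univ, hn.ne']) (fun i _ => hp i)
  simp only [smul_eq_mul, ← mul_sum] at h
  rw [div_eq_inv_mul]
  calc _ ≤ (Fintype.card ι : ℝ) * ((Fintype.card ι : ℝ)⁻¹ * ∑ i, f (p i)) := by gcongr
    _ = ∑ i, f (p i) := by field_simp

/-- For positive reals `P` and `a₁,...,a_K`, the ZF sum rate with vector normalization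
dominates that with matrix normalization:
`∑ₖ log₂(1 + P/(K aₖ)) ≥ K log₂(1 + P/(∑ₖ aₖ))`. -/
theorem stmt_9 (K : ℕ) (hK : 0 < K) (P : ℝ) (hP : 0 < P)
    (a : Fin K → ℝ) (ha : ∀ k, 0 < a k) :
    ∑ k, Real.logb 2 (1 + P / (K * a k))
      ≥ K * Real.logb 2 (1 + P / (∑ k, a k)) := by
  have : Nonempty (Fin K) := ⟨⟨0, hK⟩⟩
  have hK0 : (K : ℝ) ≠ 0 := by positivity
  have hconv : ConvexOn ℝ (Ioi 0) (fun x => logb 2 (1 + P / K / x)) :=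
    ((convexOn_log_one_add_div (c := P / K) (by positivity)).smul
      (inv_nonneg.2 (log_nonneg one_le_two))).congr
      fun x _ => by simp only [logb, smul_eq_mul, div_eq_inv_mul (log _)]
  have h := hconv.card_mul_map_average_le ha
  simpa only [Fintype.card_fin, div_div_div_cancel_right₀ hK0, div_div] using h
end

section
/- Let M, K be integers with 2 ≤ K ≤ M and P_t > 0. Then P_t(M−K+1)/K ≥ P_t(M+1)/(P_t(K−1)+K) if and only if P_t ≥ K²/((K−1)(M−K+1)). -/
/-- For integers `2 ≤ K ≤ M` and `P_t > 0`:
`P_t(M−K+1)/K ≥ P_t(M+1)/(P_t(K−1)+K)` iff `P_t ≥ K²/((K−1)(M−K+1))`. -/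
theorem stmt_10 (M K : ℕ) (hK : 2 ≤ K) (hKM : K ≤ M) (P : ℝ) (hP : 0 < P) :
    P * ((M : ℝ) - K + 1) / K ≥ P * ((M : ℝ) + 1) / (P * ((K : ℝ) - 1) + K)
      ↔ P ≥ (K : ℝ) ^ 2 / (((K : ℝ) - 1) * ((M : ℝ) - K + 1)) := by
  have hK' : (2 : ℝ) ≤ K := by exact_mod_cast hK
  have hKM' : (K : ℝ) ≤ M := by exact_mod_cast hKM
  have hKpos : (0 : ℝ) < K := by linarith
  have hden : (0 : ℝ) < P * ((K : ℝ) - 1) + K := by nlinarith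
  have hprod : (0 : ℝ) < ((K : ℝ) - 1) * ((M : ℝ) - K + 1) := by nlinarith
  rw [ge_iff_le, div_le_div_iff₀ hden hKpos, ge_iff_le, div_le_iff₀ hprod]
  constructor
  · intro h; nlinarith
  · intro h; nlinarith
end
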